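/- arXiv:2605.10783 — 3 statements merged into one kernel-verified Lean document; each statement's English description precedes it below -/
import Mathlib

section
/- Let Q := (1/√2) · [[1,0,0,i],[0,i,1,0],[0,i,−1,0],[1,0,0,−i]] (the Bell basis transformation). Then for every c = (c₁,c₂,c₃) ∈ ℝ³, Q† · exp(H(c)) · Q is the diagonal matrix diag( e^{i(c₁−c₂+c₃)}, e^{i(c₁+c₂−c₃)}, e^{−i(c₁+c₂+c₃)}, e^{i(−c₁+c₂+c₃)} ), where Q† is the conjugate transpose of Q. -/
open Matrix Kronecker Complex

noncomputable section

/-- Pauli matrix `σx`. -/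
def σx : Matrix (Fin 2) (Fin 2) ℂ := !![0, 1; 1, 0]

/-- Pauli matrix `σy`. -/
def σy : Matrix (Fin 2) (Fin 2) ℂ := !![0, -Complex.I; Complex.I, 0]

/-- Pauli matrix `σz`. -/
def σz : Matrix (Fin 2) (Fin 2) ℂ := !![1, 0; 0, -1]

/-- Kronecker product of two `2 × 2` matrices, reindexed as a `4 × 4` matrix. -/
def KP (a b : Matrix (Fin 2) (Fin 2) ℂ) : Matrix (Fin 4) (Fin 4) ℂ :=
  Matrix.reindex finProdFinEquiv finProdFinEquiv (a ⊗ₖ b)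

/-- The special unitary group `SU(n)`, as a set of `n × n` complex matrices. -/
def SU (n : ℕ) : Set (Matrix (Fin n) (Fin n) ℂ) :=
  { g | g ∈ Matrix.unitaryGroup (Fin n) ℂ ∧ g.det = 1 }

/-- `K = SU(2) ⊗ SU(2)`, the set of local gates inside `SU(4)`. -/
def Kset : Set (Matrix (Fin 4) (Fin 4) ℂ) :=
  { m | ∃ a ∈ SU 2, ∃ b ∈ SU 2, m = KP a b }

/-- `H(c) = i (c₁ σx⊗σx + c₂ σy⊗σy + c₃ σz⊗σz)`. -/
def Hc (c : Fin 3 → ℝ) : Matrix (Fin 4) (Fin 4) ℂ :=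
  Complex.I • ((c 0 : ℂ) • KP σx σx + (c 1 : ℂ) • KP σy σy + (c 2 : ℂ) • KP σz σz)

/-- The Bell basis transformation matrix. -/
def Q : Matrix (Fin 4) (Fin 4) ℂ :=
  ((1 : ℝ) / Real.sqrt 2) •
    !![1, 0, 0, Complex.I; 0, Complex.I, 1, 0; 0, Complex.I, -1, 0; 1, 0, 0, -Complex.I]

lemma KPxx : KP σx σx = !![0,0,0,1; 0,0,1,0; 0,1,0,0; 1,0,0,0] := by
  ext i j
  fin_cases i <;> fin_cases j <;>
    simp [KP, σx, finProdFinEquiv, Fin.divNat, Fin.modNat, show ((3 : Fin 4) : ℕ) = 3 from rfl,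
      Matrix.vecHead, Matrix.vecTail]

lemma KPyy : KP σy σy = !![0,0,0,-1; 0,0,1,0; 0,1,0,0; -1,0,0,0] := by
  ext i j
  fin_cases i <;> fin_cases j <;>
    simp [KP, σy, finProdFinEquiv, Fin.divNat, Fin.modNat, show ((3 : Fin 4) : ℕ) = 3 from rfl,
      Matrix.vecHead, Matrix.vecTail, Complex.ext_iff]

lemma KPzz : KP σz σz = !![1,0,0,0; 0,-1,0,0; 0,0,-1,0; 0,0,0,1] := by
  ext i j
  fin_cases i <;> fin_cases j <;>
    simp [KP, σz, finProdFinEquiv, Fin.divNat, Fin.modNat, show ((3 : Fin 4) : ℕ) = 3 from rfl,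
      Matrix.vecHead, Matrix.vecTail]

lemma sqrt2_ne : (Real.sqrt 2 : ℂ) ≠ 0 := by
  norm_cast; positivity

lemma sq2 : ((Real.sqrt 2 : ℂ)) * (Real.sqrt 2 : ℂ) = 2 := by
  rw [← Complex.ofReal_mul, Real.mul_self_sqrt (by norm_num : (0:ℝ) ≤ 2)]; norm_num

lemma hQQ : Q * Qᴴ = 1 := by
  have h2 := sq2
  ext i j
  fin_cases i <;> fin_cases j <;>
    · simp [Q, Matrix.mul_apply, Fin.sum_univ_four, Matrix.conjTranspose_apply,
        Matrix.smul_apply, div_mul_div_comm]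
      try field_simp
      try rw [sq2]
      try ring_nf
      try simp [sq2]
      try (rw [sq, sq2] <;> norm_num)

lemma hQQ' : Qᴴ * Q = 1 := by
  have h2 := sq2
  ext i j
  fin_cases i <;> fin_cases j <;>
    · simp [Q, Matrix.mul_apply, Fin.sum_univ_four, Matrix.conjTranspose_apply,
        Matrix.smul_apply, div_mul_div_comm]
      try field_simp
      try rw [sq2]
      try ring_nf
      try simp [sq2]
      try (rw [sq, sq2] <;> norm_num)

def Dv (c : Fin 3 → ℝ) : Fin 4 → ℂ :=
  ![Complex.I * ((c 0 : ℂ) - c 1 + c 2),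
    Complex.I * ((c 0 : ℂ) + c 1 - c 2),
    -Complex.I * ((c 0 : ℂ) + c 1 + c 2),
    Complex.I * (-(c 0 : ℂ) + c 1 + c 2)]

lemma hconj (c : Fin 3 → ℝ) : Hc c = Q * Matrix.diagonal (Dv c) * Qᴴ := by
  have : Hc c * Q = Q * Matrix.diagonal (Dv c) := by
    ext i j
    fin_cases i <;> fin_cases j <;>
      simp [Hc, KPxx, KPyy, KPzz, Q, Dv, Matrix.mul_apply, Fin.sum_univ_four,
        Matrix.diagonal, Matrix.smul_apply, Fin.val] <;> ring
  calc Hc c = Hc c * (Q * Qᴴ) := by rw [hQQ, mul_one]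
    _ = (Hc c * Q) * Qᴴ := by rw [mul_assoc]
    _ = Q * Matrix.diagonal (Dv c) * Qᴴ := by rw [this]

/-- In the Bell basis, `exp(H(c))` is diagonal with the displayed phases. -/
theorem stmt4 (c : Fin 3 → ℝ) :
    Qᴴ * NormedSpace.exp (Hc c) * Q =
      Matrix.diagonal
        ![Complex.exp (Complex.I * ((c 0 : ℂ) - c 1 + c 2)),
          Complex.exp (Complex.I * ((c 0 : ℂ) + c 1 - c 2)),
          Complex.exp (-Complex.I * ((c 0 : ℂ) + c 1 + c 2)),
          Complex.exp (Complex.I * (-(c 0 : ℂ) + c 1 + c 2))] := by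
  let U : (Matrix (Fin 4) (Fin 4) ℂ)ˣ := ⟨Q, Qᴴ, hQQ, hQQ'⟩
  have hU : NormedSpace.exp (Hc c)
      = Q * NormedSpace.exp (Matrix.diagonal (Dv c)) * Qᴴ := by
    rw [hconj]
    exact Matrix.exp_units_conj U _
  rw [hU, ← mul_assoc, ← mul_assoc, hQQ', one_mul, mul_assoc, hQQ', mul_one,
    Matrix.exp_diagonal, Pi.exp_def]
  exact congrArg Matrix.diagonal (by
    funext i; fin_cases i <;> simp [Dv, ← Complex.exp_eq_exp_ℂ])
end
end

section
/- (Unit lattice of SU(4)) For c = (c₁,c₂,c₃) ∈ ℝ³, exp(H(c)) = I₄ (the 4×4 identity matrix) if and only if there exist integers n₁, n₂, n₃ with cᵢ = π nᵢ for i = 1,2,3 and n₁ + n₂ + n₃ even; equivalently, each cᵢ ∈ πℤ and the integers cᵢ/π are either all even or exactly two of them are odd. -/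
open Matrix Kronecker Complex

set_option maxHeartbeats 1000000

noncomputable section

def Pm : Matrix (Fin 4) (Fin 4) ℂ := !![1,1,0,0; 0,0,1,1; 0,0,1,-1; 1,-1,0,0]
def Qm : Matrix (Fin 4) (Fin 4) ℂ :=
  !![1/2,0,0,1/2; 1/2,0,0,-(1/2); 0,1/2,1/2,0; 0,1/2,-(1/2),0]

lemma PQ : Pm * Qm = 1 := by
  ext i j
  fin_cases i <;> fin_cases j <;>
    simp [Pm, Qm, Matrix.mul_apply, Fin.sum_univ_four, Matrix.one_apply, vecHead, vecTail] <;> norm_num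

lemma QP : Qm * Pm = 1 := by
  ext i j
  fin_cases i <;> fin_cases j <;>
    simp [Pm, Qm, Matrix.mul_apply, Fin.sum_univ_four, Matrix.one_apply, vecHead, vecTail] <;> norm_num

def Um : (Matrix (Fin 4) (Fin 4) ℂ)ˣ := ⟨Pm, Qm, PQ, QP⟩

def vv (c : Fin 3 → ℝ) : Fin 4 → ℂ :=
  ![Complex.I * ((c 0 : ℂ) - c 1 + c 2), Complex.I * (-(c 0 : ℂ) + c 1 + c 2),
    Complex.I * ((c 0 : ℂ) + c 1 - c 2), Complex.I * (-(c 0 : ℂ) - c 1 - c 2)]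

lemma hHc (c : Fin 3 → ℝ) :
    Hc c = (Um : Matrix (Fin 4) (Fin 4) ℂ) * Matrix.diagonal (vv c) *
      ((Um⁻¹ : (Matrix (Fin 4) (Fin 4) ℂ)ˣ) : Matrix (Fin 4) (Fin 4) ℂ) := by
  show Hc c = Pm * Matrix.diagonal (vv c) * Qm
  rw [Hc, KPxx, KPyy, KPzz]
  ext i j
  fin_cases i <;> fin_cases j <;>
    (simp [Matrix.mul_apply, Matrix.vecMul_diagonal, Matrix.diagonal_apply, Fin.sum_univ_four,
      Pm, Qm, vv, vecHead, vecTail] <;> ring)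

/-- Unit lattice of SU(4): `exp(H(c)) = 1` iff each `cᵢ = π nᵢ` with integers `nᵢ`
whose sum is even. -/
theorem stmt5 (c : Fin 3 → ℝ) :
    NormedSpace.exp (Hc c) = 1 ↔
      ∃ n : Fin 3 → ℤ, (∀ i, c i = Real.pi * n i) ∧ Even (n 0 + n 1 + n 2) := by
  rw [hHc, Matrix.exp_units_conj, Matrix.exp_diagonal]
  have hconj : ∀ X : Matrix (Fin 4) (Fin 4) ℂ,
      ((Um : Matrix (Fin 4) (Fin 4) ℂ) * X *
        ((Um⁻¹ : (Matrix (Fin 4) (Fin 4) ℂ)ˣ) : Matrix (Fin 4) (Fin 4) ℂ) = 1) ↔ X = 1 := by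
    intro X
    rw [Units.mul_inv_eq_iff_eq_mul, one_mul]
    constructor
    · intro h
      have h2 : (Um : Matrix (Fin 4) (Fin 4) ℂ) * X = (Um : Matrix (Fin 4) (Fin 4) ℂ) * 1 := by
        rw [mul_one]; exact h
      exact (Units.mul_right_inj Um).mp h2
    · rintro rfl
      rw [mul_one]
  rw [hconj]
  have hdiag : Matrix.diagonal (NormedSpace.exp (vv c)) = 1 ↔
      ∀ i, NormedSpace.exp (vv c) i = 1 := by
    rw [← Matrix.diagonal_one]
    constructor
    · intro h i
      have := congrFun (congrFun h i) i
      simpa using this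
    · intro h
      have h1 : NormedSpace.exp (vv c) = 1 := funext fun i => by simpa using h i
      rw [h1]
      rfl
  rw [hdiag]
  have hexp : ∀ i, NormedSpace.exp (vv c) i = Complex.exp (vv c i) := by
    intro i
    rw [Pi.exp_def, ← Complex.exp_eq_exp_ℂ]
  have key : (∀ i, NormedSpace.exp (vv c) i = 1) ↔
      ∀ i, ∃ k : ℤ, vv c i = k * (2 * Real.pi * Complex.I) := by
    constructor
    · intro h i; rw [← Complex.exp_eq_one_iff, ← hexp i]; exact h i
    · intro h i; rw [hexp i, Complex.exp_eq_one_iff]; exact h i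
  rw [key]
  constructor
  · intro h
    obtain ⟨k0, h0⟩ := h 0
    obtain ⟨k1, h1⟩ := h 1
    obtain ⟨k2, h2⟩ := h 2
    have e0 : c 0 - c 1 + c 2 = 2 * Real.pi * k0 := by
      have hI : Complex.I * ((c 0 : ℂ) - c 1 + c 2) = Complex.I * (2 * Real.pi * k0) := by
        have := h0.trans (show ((k0 : ℂ)) * (2 * Real.pi * Complex.I)
          = Complex.I * (2 * Real.pi * k0) by ring)
        simpa [vv] using this
      have := mul_left_cancel₀ Complex.I_ne_zero hI
      exact_mod_cast this
    have e1 : -c 0 + c 1 + c 2 = 2 * Real.pi * k1 := by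
      have hI : Complex.I * (-(c 0 : ℂ) + c 1 + c 2) = Complex.I * (2 * Real.pi * k1) := by
        have := h1.trans (show ((k1 : ℂ)) * (2 * Real.pi * Complex.I)
          = Complex.I * (2 * Real.pi * k1) by ring)
        simpa [vv] using this
      have := mul_left_cancel₀ Complex.I_ne_zero hI
      exact_mod_cast this
    have e2 : c 0 + c 1 - c 2 = 2 * Real.pi * k2 := by
      have hI : Complex.I * ((c 0 : ℂ) + c 1 - c 2) = Complex.I * (2 * Real.pi * k2) := by
        have := h2.trans (show ((k2 : ℂ)) * (2 * Real.pi * Complex.I)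
          = Complex.I * (2 * Real.pi * k2) by ring)
        simpa [vv] using this
      have := mul_left_cancel₀ Complex.I_ne_zero hI
      exact_mod_cast this
    refine ⟨![k0 + k2, k1 + k2, k0 + k1], ?_, ?_⟩
    · intro i
      fin_cases i
      · show c 0 = Real.pi * ((↑(k0 + k2) : ℤ) : ℝ)
        push_cast
        linarith
      · show c 1 = Real.pi * ((↑(k1 + k2) : ℤ) : ℝ)
        push_cast
        linarith
      · show c 2 = Real.pi * ((↑(k0 + k1) : ℤ) : ℝ)
        push_cast
        linarith
    · refine ⟨k0 + k1 + k2, ?_⟩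
      show (k0 + k2) + (k1 + k2) + (k0 + k1) = _
      ring
  · rintro ⟨n, hn, m, hm⟩
    have hmC : ((n 0 : ℂ)) + n 1 + n 2 = m + m := by exact_mod_cast hm
    intro i
    fin_cases i
    · refine ⟨m - n 1, ?_⟩
      show Complex.I * ((c 0 : ℂ) - c 1 + c 2) = _
      rw [hn 0, hn 1, hn 2]
      push_cast
      linear_combination (Complex.I * (Real.pi : ℂ)) * hmC
    · refine ⟨m - n 0, ?_⟩
      show Complex.I * (-(c 0 : ℂ) + c 1 + c 2) = _
      rw [hn 0, hn 1, hn 2]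
      push_cast
      linear_combination (Complex.I * (Real.pi : ℂ)) * hmC
    · refine ⟨m - n 2, ?_⟩
      show Complex.I * ((c 0 : ℂ) + c 1 - c 2) = _
      rw [hn 0, hn 1, hn 2]
      push_cast
      linear_combination (Complex.I * (Real.pi : ℂ)) * hmC
    · refine ⟨-m, ?_⟩
      show Complex.I * (-(c 0 : ℂ) - c 1 - c 2) = _
      rw [hn 0, hn 1, hn 2]
      push_cast
      linear_combination (-(Complex.I) * (Real.pi : ℂ)) * hmC
end
end

section
/- (K-lattice of SU(4)) For c = (c₁,c₂,c₃) ∈ ℝ³, exp(H(c)) ∈ K (i.e., exp(H(c)) = a ⊗ b for some a, b ∈ SU(2)) if and only if there exist integers n₁, n₂, n₃ with 2cᵢ = π nᵢ for i = 1,2,3 and n₁ + n₂ + n₃ even; equivalently, each 2cᵢ ∈ πℤ and the integers 2cᵢ/π are either all even or exactly two of them are odd. -/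
open Matrix Kronecker Complex

noncomputable section

-- auxiliary
def Umat : Matrix (Fin 4) (Fin 4) ℂ := !![1,0,1,0; 0,1,0,1; 0,1,0,-1; 1,0,-1,0]
def Vmat : Matrix (Fin 4) (Fin 4) ℂ :=
  !![1/2,0,0,1/2; 0,1/2,1/2,0; 1/2,0,0,-(1/2); 0,1/2,-(1/2),0]

lemma KP_eq (a b : Matrix (Fin 2) (Fin 2) ℂ) :
    KP a b = !![a 0 0 * b 0 0, a 0 0 * b 0 1, a 0 1 * b 0 0, a 0 1 * b 0 1;
                a 0 0 * b 1 0, a 0 0 * b 1 1, a 0 1 * b 1 0, a 0 1 * b 1 1;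
                a 1 0 * b 0 0, a 1 0 * b 0 1, a 1 1 * b 0 0, a 1 1 * b 0 1;
                a 1 0 * b 1 0, a 1 0 * b 1 1, a 1 1 * b 1 0, a 1 1 * b 1 1] := by
  ext i j
  fin_cases i <;> fin_cases j <;>
    simp [KP, Matrix.kroneckerMap_apply] <;> rfl

lemma UV : Umat * Vmat = 1 := by
  ext i j
  fin_cases i <;> fin_cases j <;>
    simp [Umat, Vmat, Matrix.mul_apply, Fin.sum_univ_four] <;> norm_num

lemma VU : Vmat * Umat = 1 := by
  ext i j
  fin_cases i <;> fin_cases j <;>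
    simp [Umat, Vmat, Matrix.mul_apply, Fin.sum_univ_four] <;> norm_num

def Mv (v : Fin 4 → ℂ) : Matrix (Fin 4) (Fin 4) ℂ := Umat * Matrix.diagonal v * Vmat

lemma Mv_eq (v : Fin 4 → ℂ) :
    Mv v = !![(v 0 + v 2)/2, 0, 0, (v 0 - v 2)/2;
              0, (v 1 + v 3)/2, (v 1 - v 3)/2, 0;
              0, (v 1 - v 3)/2, (v 1 + v 3)/2, 0;
              (v 0 - v 2)/2, 0, 0, (v 0 + v 2)/2] := by
  ext i j
  fin_cases i <;> fin_cases j <;>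
    simp [Mv, Umat, Vmat, Matrix.mul_apply, Fin.sum_univ_four, Matrix.vecMul_diagonal, Matrix.vecHead, Matrix.vecTail] <;> ring

def dv (c : Fin 3 → ℝ) : Fin 4 → ℂ :=
  ![Complex.I * (c 0 - c 1 + c 2), Complex.I * (c 0 + c 1 - c 2),
    Complex.I * (-c 0 + c 1 + c 2), Complex.I * (-c 0 - c 1 - c 2)]

lemma Hc_eq (c : Fin 3 → ℝ) : Hc c = Umat * Matrix.diagonal (dv c) * Vmat := by
  show Hc c = Mv (dv c)
  rw [Mv_eq]
  ext i j
  fin_cases i <;> fin_cases j <;>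
    simp [Hc, KP_eq, σx, σy, σz, dv] <;> ring

def Uunit : (Matrix (Fin 4) (Fin 4) ℂ)ˣ := ⟨Umat, Vmat, UV, VU⟩

lemma exp_Hc (c : Fin 3 → ℝ) :
    NormedSpace.exp (Hc c) = Mv (fun j => Complex.exp (dv c j)) := by
  rw [Hc_eq]
  have h1 : (Uunit : Matrix (Fin 4) (Fin 4) ℂ) = Umat := rfl
  have h2 : ((Uunit⁻¹ : (Matrix (Fin 4) (Fin 4) ℂ)ˣ) : Matrix (Fin 4) (Fin 4) ℂ) = Vmat := rfl
  calc NormedSpace.exp (Umat * Matrix.diagonal (dv c) * Vmat)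
      = NormedSpace.exp ((Uunit : Matrix (Fin 4) (Fin 4) ℂ) * Matrix.diagonal (dv c) * Uunit⁻¹) := by
        rw [h1, h2]
    _ = Uunit * NormedSpace.exp (Matrix.diagonal (dv c)) * Uunit⁻¹ :=
        Matrix.exp_units_conj Uunit _
    _ = Mv (fun j => Complex.exp (dv c j)) := by
        rw [Matrix.exp_diagonal, h1, h2, Mv]
        congr 2
        ext j
        rw [Pi.exp_def]
        simp [Complex.exp_eq_exp_ℂ]

-- SU(2) structure
lemma su2_star (a : Matrix (Fin 2) (Fin 2) ℂ) (ha : a ∈ SU 2) :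
    (starRingEnd ℂ) (a 0 0) = a 1 1 ∧ (starRingEnd ℂ) (a 1 0) = -(a 0 1) ∧
    (starRingEnd ℂ) (a 0 1) = -(a 1 0) ∧ (starRingEnd ℂ) (a 1 1) = a 0 0 := by
  obtain ⟨haU, haD⟩ := ha
  have h1 : star a * a = 1 := Matrix.mem_unitaryGroup_iff'.mp haU
  have h2 : a * a.adjugate = 1 := by rw [Matrix.mul_adjugate, haD, one_smul]
  have h3 : star a = a.adjugate := by
    calc star a = star a * (a * a.adjugate) := by rw [h2, mul_one]
    _ = (star a * a) * a.adjugate := by rw [mul_assoc]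
    _ = a.adjugate := by rw [h1, one_mul]
  rw [Matrix.adjugate_fin_two] at h3
  refine ⟨?_, ?_, ?_, ?_⟩
  · have := congrFun (congrFun h3 0) 0; simpa [Matrix.star_apply] using this
  · have := congrFun (congrFun h3 0) 1; simpa [Matrix.star_apply] using this
  · have := congrFun (congrFun h3 1) 0; simpa [Matrix.star_apply] using this
  · have := congrFun (congrFun h3 1) 1; simpa [Matrix.star_apply] using this

lemma su2_det (a : Matrix (Fin 2) (Fin 2) ℂ) (ha : a ∈ SU 2) :
    a 0 0 * a 1 1 - a 0 1 * a 1 0 = 1 := by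
  have := ha.2
  rwa [Matrix.det_fin_two] at this

lemma forward (v : Fin 4 → ℂ) (hv : ∀ j, v j * (starRingEnd ℂ) (v j) = 1)
    (hm : Mv v ∈ Kset) : v 0 ^ 2 = 1 ∧ v 1 ^ 2 = 1 ∧ v 2 ^ 2 = 1 := by
  obtain ⟨a, ha, b, hb, hM⟩ := hm
  obtain ⟨ca0, ca1, ca2, ca3⟩ := su2_star a ha
  obtain ⟨cb0, cb1, cb2, cb3⟩ := su2_star b hb
  have da := su2_det a ha
  have db := su2_det b hb
  rw [Mv_eq, KP_eq] at hM
  have e00 : (v 0 + v 2)/2 = a 0 0 * b 0 0 := by simpa using congrFun (congrFun hM 0) 0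
  have e01 : (0:ℂ) = a 0 0 * b 0 1 := by simpa using congrFun (congrFun hM 0) 1
  have e02 : (0:ℂ) = a 0 1 * b 0 0 := by simpa using congrFun (congrFun hM 0) 2
  have e03 : (v 0 - v 2)/2 = a 0 1 * b 0 1 := by simpa using congrFun (congrFun hM 0) 3
  have e10 : (0:ℂ) = a 0 0 * b 1 0 := by simpa using congrFun (congrFun hM 1) 0
  have e11 : (v 1 + v 3)/2 = a 0 0 * b 1 1 := by simpa using congrFun (congrFun hM 1) 1
  have e12 : (v 1 - v 3)/2 = a 0 1 * b 1 0 := by simpa using congrFun (congrFun hM 1) 2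
  have e20 : (0:ℂ) = a 1 0 * b 0 0 := by simpa using congrFun (congrFun hM 2) 0
  have e21 : (v 1 - v 3)/2 = a 1 0 * b 0 1 := by simpa using congrFun (congrFun hM 2) 1
  have e22 : (v 1 + v 3)/2 = a 1 1 * b 0 0 := by simpa using congrFun (congrFun hM 2) 2
  have e30 : (v 0 - v 2)/2 = a 1 0 * b 1 0 := by simpa using congrFun (congrFun hM 3) 0
  have e33 : (v 0 + v 2)/2 = a 1 1 * b 1 1 := by simpa using congrFun (congrFun hM 3) 3
  by_cases hA : a 0 0 = 0
  · have ha11 : a 1 1 = 0 := by rw [← ca0, hA, map_zero]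
    have ha01 : a 0 1 ≠ 0 := by
      intro h; rw [hA, h] at da; simp at da
    have hb00 : b 0 0 = 0 := by
      rcases mul_eq_zero.mp e02.symm with h | h
      · exact absurd h ha01
      · exact h
    have hb11 : b 1 1 = 0 := by rw [← cb0, hb00, map_zero]
    have hv02 : v 2 = -v 0 := by
      rw [hA, zero_mul] at e00; linear_combination 2 * e00
    have hv13 : v 3 = -v 1 := by
      rw [hA, zero_mul] at e11; linear_combination 2 * e11
    have h1 : v 0 = a 0 1 * b 0 1 := by rw [hv02] at e03; linear_combination e03
    have h2 : v 0 = a 1 0 * b 1 0 := by rw [hv02] at e30; linear_combination e30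
    have hc0 : (starRingEnd ℂ) (v 0) = v 0 := by
      rw [h1, _root_.map_mul, ca2, cb2]; linear_combination h1 - h2
    have hv0sq : v 0 ^ 2 = 1 := by
      have := hv 0; rw [hc0] at this; linear_combination this
    have h3 : v 1 = a 0 1 * b 1 0 := by rw [hv13] at e12; linear_combination e12
    have h4 : v 1 = a 1 0 * b 0 1 := by rw [hv13] at e21; linear_combination e21
    have hc1 : (starRingEnd ℂ) (v 1) = v 1 := by
      rw [h3, _root_.map_mul, ca2, cb1]; linear_combination h3 - h4
    have hv1sq : v 1 ^ 2 = 1 := by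
      have := hv 1; rw [hc1] at this; linear_combination this
    refine ⟨hv0sq, hv1sq, ?_⟩
    rw [hv02]; linear_combination hv0sq
  · have hb01 : b 0 1 = 0 := by
      rcases mul_eq_zero.mp e01.symm with h | h
      · exact absurd h hA
      · exact h
    have hb10 : b 1 0 = 0 := by
      rcases mul_eq_zero.mp e10.symm with h | h
      · exact absurd h hA
      · exact h
    have hb00ne : b 0 0 ≠ 0 := by
      intro h; rw [h, hb01] at db; simp at db
    have ha01 : a 0 1 = 0 := by
      rcases mul_eq_zero.mp e02.symm with h | h
      · exact h
      · exact absurd h hb00ne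
    have ha10 : a 1 0 = 0 := by
      rcases mul_eq_zero.mp e20.symm with h | h
      · exact h
      · exact absurd h hb00ne
    have hv02 : v 2 = v 0 := by
      rw [ha01, zero_mul] at e03; linear_combination -2 * e03
    have hv13 : v 3 = v 1 := by
      rw [ha01, zero_mul] at e12; linear_combination -2 * e12
    have h1 : v 0 = a 0 0 * b 0 0 := by rw [hv02] at e00; linear_combination e00
    have h2 : v 0 = a 1 1 * b 1 1 := by rw [hv02] at e33; linear_combination e33
    have hc0 : (starRingEnd ℂ) (v 0) = v 0 := by
      rw [h1, _root_.map_mul, ca0, cb0]; linear_combination h1 - h2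
    have hv0sq : v 0 ^ 2 = 1 := by
      have := hv 0; rw [hc0] at this; linear_combination this
    have h3 : v 1 = a 0 0 * b 1 1 := by rw [hv13] at e11; linear_combination e11
    have h4 : v 1 = a 1 1 * b 0 0 := by rw [hv13] at e22; linear_combination e22
    have hc1 : (starRingEnd ℂ) (v 1) = v 1 := by
      rw [h3, _root_.map_mul, ca0, cb3]; linear_combination h3 - h4
    have hv1sq : v 1 ^ 2 = 1 := by
      have := hv 1; rw [hc1] at this; linear_combination this
    refine ⟨hv0sq, hv1sq, ?_⟩
    rw [hv02]; exact hv0sq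

lemma su2_mk (A : Matrix (Fin 2) (Fin 2) ℂ) (h : A * star A = 1) (d : A.det = 1) : A ∈ SU 2 :=
  ⟨Matrix.mem_unitaryGroup_iff.mpr h, d⟩

lemma su_id : !![(1:ℂ),0;0,1] ∈ SU 2 := by
  refine su2_mk _ ?_ ?_
  · ext i j; fin_cases i <;> fin_cases j <;>
      simp [Matrix.mul_apply, Fin.sum_univ_two, Matrix.star_eq_conjTranspose, Matrix.conjTranspose_apply, Matrix.one_apply]
  · simp [Matrix.det_fin_two_of]

lemma su_nid : !![(-1:ℂ),0;0,-1] ∈ SU 2 := by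
  refine su2_mk _ ?_ ?_
  · ext i j; fin_cases i <;> fin_cases j <;>
      simp [Matrix.mul_apply, Fin.sum_univ_two, Matrix.star_eq_conjTranspose, Matrix.conjTranspose_apply, Matrix.one_apply]
  · simp [Matrix.det_fin_two_of]

lemma su_ix : !![(0:ℂ),Complex.I;Complex.I,0] ∈ SU 2 := by
  refine su2_mk _ ?_ ?_
  · ext i j; fin_cases i <;> fin_cases j <;>
      simp [Matrix.mul_apply, Fin.sum_univ_two, Matrix.star_eq_conjTranspose, Matrix.conjTranspose_apply, Matrix.one_apply]
  · simp [Matrix.det_fin_two_of]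

lemma su_nix : !![(0:ℂ),-Complex.I;-Complex.I,0] ∈ SU 2 := by
  refine su2_mk _ ?_ ?_
  · ext i j; fin_cases i <;> fin_cases j <;>
      simp [Matrix.mul_apply, Fin.sum_univ_two, Matrix.star_eq_conjTranspose, Matrix.conjTranspose_apply, Matrix.one_apply]
  · simp [Matrix.det_fin_two_of]

lemma su_iy : !![(0:ℂ),1;-1,0] ∈ SU 2 := by
  refine su2_mk _ ?_ ?_
  · ext i j; fin_cases i <;> fin_cases j <;>
      simp [Matrix.mul_apply, Fin.sum_univ_two, Matrix.star_eq_conjTranspose, Matrix.conjTranspose_apply, Matrix.one_apply]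
  · simp [Matrix.det_fin_two_of]

lemma su_niy : !![(0:ℂ),-1;1,0] ∈ SU 2 := by
  refine su2_mk _ ?_ ?_
  · ext i j; fin_cases i <;> fin_cases j <;>
      simp [Matrix.mul_apply, Fin.sum_univ_two, Matrix.star_eq_conjTranspose, Matrix.conjTranspose_apply, Matrix.one_apply]
  · simp [Matrix.det_fin_two_of]

lemma su_iz : !![Complex.I,0;0,-Complex.I] ∈ SU 2 := by
  refine su2_mk _ ?_ ?_
  · ext i j; fin_cases i <;> fin_cases j <;>
      simp [Matrix.mul_apply, Fin.sum_univ_two, Matrix.star_eq_conjTranspose, Matrix.conjTranspose_apply, Matrix.one_apply]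
  · simp [Matrix.det_fin_two_of]

lemma su_niz : !![-Complex.I,0;0,Complex.I] ∈ SU 2 := by
  refine su2_mk _ ?_ ?_
  · ext i j; fin_cases i <;> fin_cases j <;>
      simp [Matrix.mul_apply, Fin.sum_univ_two, Matrix.star_eq_conjTranspose, Matrix.conjTranspose_apply, Matrix.one_apply]
  · simp [Matrix.det_fin_two_of]

lemma backward (v : Fin 4 → ℂ) (h0 : v 0 = 1 ∨ v 0 = -1) (h1 : v 1 = 1 ∨ v 1 = -1)
    (h2 : v 2 = 1 ∨ v 2 = -1) (hp : v 0 * v 1 * v 2 * v 3 = 1) : Mv v ∈ Kset := by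
  rcases h0 with h0 | h0 <;> rcases h1 with h1 | h1 <;> rcases h2 with h2 | h2
  · have h3 : v 3 = 1 := by rw [h0, h1, h2] at hp; linear_combination hp
    exact ⟨_, su_id, _, su_id, by
      rw [Mv_eq, KP_eq, h0, h1, h2, h3]; norm_num [Matrix.ext_iff.symm]⟩
  · have h3 : v 3 = -1 := by rw [h0, h1, h2] at hp; linear_combination -hp
    exact ⟨_, su_ix, _, su_nix, by
      rw [Mv_eq, KP_eq, h0, h1, h2, h3]; norm_num [Matrix.ext_iff.symm]⟩
  · have h3 : v 3 = -1 := by rw [h0, h1, h2] at hp; linear_combination -hp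
    exact ⟨_, su_iz, _, su_niz, by
      rw [Mv_eq, KP_eq, h0, h1, h2, h3]; norm_num [Matrix.ext_iff.symm]⟩
  · have h3 : v 3 = 1 := by rw [h0, h1, h2] at hp; linear_combination hp
    exact ⟨_, su_iy, _, su_iy, by
      rw [Mv_eq, KP_eq, h0, h1, h2, h3]; norm_num [Matrix.ext_iff.symm]⟩
  · have h3 : v 3 = -1 := by rw [h0, h1, h2] at hp; linear_combination -hp
    exact ⟨_, su_iy, _, su_niy, by
      rw [Mv_eq, KP_eq, h0, h1, h2, h3]; norm_num [Matrix.ext_iff.symm]⟩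
  · have h3 : v 3 = 1 := by rw [h0, h1, h2] at hp; linear_combination hp
    exact ⟨_, su_iz, _, su_iz, by
      rw [Mv_eq, KP_eq, h0, h1, h2, h3]; norm_num [Matrix.ext_iff.symm]⟩
  · have h3 : v 3 = 1 := by rw [h0, h1, h2] at hp; linear_combination hp
    exact ⟨_, su_ix, _, su_ix, by
      rw [Mv_eq, KP_eq, h0, h1, h2, h3]; norm_num [Matrix.ext_iff.symm]⟩
  · have h3 : v 3 = -1 := by rw [h0, h1, h2] at hp; linear_combination -hp
    exact ⟨_, su_nid, _, su_id, by
      rw [Mv_eq, KP_eq, h0, h1, h2, h3]; norm_num [Matrix.ext_iff.symm]⟩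

lemma dv0 (c : Fin 3 → ℝ) : dv c 0 = Complex.I * ((c 0 - c 1 + c 2 : ℝ) : ℂ) := by
  simp [dv]; try push_cast; try ring
lemma dv1 (c : Fin 3 → ℝ) : dv c 1 = Complex.I * ((c 0 + c 1 - c 2 : ℝ) : ℂ) := by
  simp [dv]; try push_cast; try ring
lemma dv2 (c : Fin 3 → ℝ) : dv c 2 = Complex.I * ((-c 0 + c 1 + c 2 : ℝ) : ℂ) := by
  simp [dv]; try push_cast; try ring

lemma key (x : ℝ) (h : Complex.exp (Complex.I * x) ^ 2 = 1) : ∃ k : ℤ, x = Real.pi * k := by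
  have h' : Complex.exp (Complex.I * x + Complex.I * x) = 1 := by
    rw [Complex.exp_add, ← sq]; exact h
  obtain ⟨n, hn⟩ := Complex.exp_eq_one_iff.mp h'
  refine ⟨n, ?_⟩
  have h3 : ((2 * x : ℝ) : ℂ) = ((2 * Real.pi * n : ℝ) : ℂ) := by
    push_cast
    linear_combination -Complex.I * hn + (2*(x:ℂ) - 2*(n:ℂ)*(Real.pi:ℂ)) * Complex.I_sq
  have h4 : (2 * x : ℝ) = 2 * Real.pi * n := by exact_mod_cast h3
  linarith

lemma pm (x : ℝ) (m : ℤ) (h : x = Real.pi * m) :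
    Complex.exp (Complex.I * x) = 1 ∨ Complex.exp (Complex.I * x) = -1 := by
  have h2 : (Complex.I * x) = (m : ℂ) * (Real.pi * Complex.I) := by
    rw [h]; push_cast; ring
  rw [h2, Complex.exp_int_mul, Complex.exp_pi_mul_I]
  rcases Int.even_or_odd m with he | ho
  · left; exact he.neg_one_zpow
  · right; exact ho.neg_one_zpow

lemma dv_conj (c : Fin 3 → ℝ) (j : Fin 4) : (starRingEnd ℂ) (dv c j) = - dv c j := by
  fin_cases j <;>
    simp [dv, _root_.map_mul, map_add, map_sub, map_neg, Complex.conj_ofReal] <;> ring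

/-- K-lattice of SU(4): `exp(H(c)) ∈ K = SU(2)⊗SU(2)` iff each `2cᵢ = π nᵢ` with
integers `nᵢ` whose sum is even. -/
theorem stmt6 (c : Fin 3 → ℝ) :
    NormedSpace.exp (Hc c) ∈ Kset ↔
      ∃ n : Fin 3 → ℤ, (∀ i, 2 * c i = Real.pi * n i) ∧ Even (n 0 + n 1 + n 2) := by
  rw [exp_Hc]
  constructor
  · intro h
    have hv : ∀ j, (fun j => Complex.exp (dv c j)) j *
        (starRingEnd ℂ) ((fun j => Complex.exp (dv c j)) j) = 1 := by
      intro j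
      simp only
      rw [← Complex.exp_conj, dv_conj, ← Complex.exp_add, add_neg_cancel, Complex.exp_zero]
    obtain ⟨s0, s1, s2⟩ := forward _ hv h
    simp only [dv0 c] at s0
    simp only [dv1 c] at s1
    simp only [dv2 c] at s2
    obtain ⟨k0, hk0⟩ := key _ s0
    obtain ⟨k1, hk1⟩ := key _ s1
    obtain ⟨k2, hk2⟩ := key _ s2
    refine ⟨![k0 + k1, k1 + k2, k0 + k2], ?_, ⟨k0 + k1 + k2, by simp [Fin.isValue]; ring⟩⟩
    intro i
    fin_cases i
    · show 2 * c 0 = Real.pi * ((k0 + k1 : ℤ) : ℝ)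
      push_cast; linear_combination hk0 + hk1
    · show 2 * c 1 = Real.pi * ((k1 + k2 : ℤ) : ℝ)
      push_cast; linear_combination hk1 + hk2
    · show 2 * c 2 = Real.pi * ((k0 + k2 : ℤ) : ℝ)
      push_cast; linear_combination hk0 + hk2
  · rintro ⟨n, hn, hev⟩
    obtain ⟨t, ht⟩ := hev
    have ht' : ((n 0 : ℝ) + n 1 + n 2) = t + t := by exact_mod_cast congrArg Int.cast ht
    have r0 : c 0 - c 1 + c 2 = Real.pi * ((t - n 1 : ℤ) : ℝ) := by
      push_cast
      linear_combination (hn 0 - hn 1 + hn 2) / 2 + (Real.pi / 2) * ht'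
    have r1 : c 0 + c 1 - c 2 = Real.pi * ((t - n 2 : ℤ) : ℝ) := by
      push_cast
      linear_combination (hn 0 + hn 1 - hn 2) / 2 + (Real.pi / 2) * ht'
    have r2 : -c 0 + c 1 + c 2 = Real.pi * ((t - n 0 : ℤ) : ℝ) := by
      push_cast
      linear_combination (-hn 0 + hn 1 + hn 2) / 2 + (Real.pi / 2) * ht'
    apply backward
    · simp only [dv0 c]
      exact pm _ _ r0
    · simp only [dv1 c]
      exact pm _ _ r1
    · simp only [dv2 c]
      exact pm _ _ r2
    · have hsum : dv c 0 + dv c 1 + dv c 2 + dv c 3 = 0 := by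
        simp [dv]; ring
      rw [← Complex.exp_add, ← Complex.exp_add, ← Complex.exp_add, hsum, Complex.exp_zero]
end
end
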